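/- arXiv:1204.5266 — 4 statements merged into one kernel-verified Lean document; each statement's English description precedes it below -/
import Mathlib

section
/- Let a and b be positive integers. The meander of type a|b (two top blocks of sizes a and b, one bottom block of size a+b) is Frobenius — that is, its meander graph is connected and acyclic — if and only if gcd(a, b) = 1. -/
/-- The meander graph of type `a₁|a₂|⋯|a_ℓ` where `L = [a₁,…,a_ℓ]` is the list of top
block sizes, on vertex set `Fin (a₁ + ⋯ + a_ℓ)`, with top edges within each block and
bottom edges `j ↔ n - 1 - j` coming from the single bottom block of size `n = L.sum`. -/
def meander (L : List ℕ) : SimpleGraph (Fin L.sum) :=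
  SimpleGraph.fromRel (fun u v =>
    (∃ k : Fin L.length, ∃ i : ℕ, i < L.get k ∧
      (u : ℕ) = (L.take k.val).sum + i ∧
      (v : ℕ) = (L.take k.val).sum + (L.get k - 1 - i))
    ∨ ((u : ℕ) + (v : ℕ) = L.sum - 1))

/-- A connected component is a cycle component if every vertex in it has degree 2. -/
def SimpleGraph.IsCycleComponent {V : Type*} (G : SimpleGraph V)
    (c : G.ConnectedComponent) : Prop :=
  ∀ v : V, G.connectedComponentMk v = c → (G.neighborSet v).ncard = 2

/-- The number of connected components of `G` that are cycles. -/
noncomputable def numCycleComponents {V : Type*} (G : SimpleGraph V) : ℕ :=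
  Nat.card {c : G.ConnectedComponent // G.IsCycleComponent c}

/-- The number of connected components of `G` that are paths (i.e. not cycles). -/
noncomputable def numPathComponents {V : Type*} (G : SimpleGraph V) : ℕ :=
  Nat.card {c : G.ConnectedComponent // ¬ G.IsCycleComponent c}

/-- A meander is Frobenius if its graph is a single path, equivalently (as every vertex
has degree at most 2) connected and acyclic. -/
def IsFrobenius {V : Type*} (G : SimpleGraph V) : Prop :=
  G.Connected ∧ G.IsAcyclic

/-!
Every edge of the meander `a|b` joins two vertices with a prescribed sum: `a - 1` or
`2a + b - 1` for the top edges, `a + b - 1` for the bottom ones. Counting pairs with a given sum,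
the graph has `a/2 + b/2 + (a+b)/2` edges, which is one less than the number `a + b` of vertices
exactly when `a` and `b` are not both even; a connected graph is a tree iff it has this many edges.
A bottom edge followed by a top edge moves `u` to `u + a mod (a + b)`, so the graph is connected
when `gcd(a, b) = 1`. Conversely, for `d = gcd(a, b)` every edge `{u, v}` has `u + v ≡ -1 mod d`,
so the vertices `≡ 0, -1 mod d` are closed under adjacency and `1` cannot be reached from `0`
when `d ≥ 3`; the case `d = 2` is ruled out by the edge count.
-/

open SimpleGraph

def sumGraph (n : ℕ) (S : Set ℕ) : SimpleGraph (Fin n) where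
  Adj u v := u ≠ v ∧ (u : ℕ) + v ∈ S
  symm := ⟨fun _ _ h => ⟨h.1.symm, by rw [add_comm]; exact h.2⟩⟩
  loopless := ⟨fun _ h => h.1 rfl⟩

namespace sumGraph

variable {n : ℕ} {S T : Set ℕ}

@[simp]
lemma adj_iff {u v : Fin n} : (sumGraph n S).Adj u v ↔ u ≠ v ∧ (u : ℕ) + v ∈ S := Iff.rfl

lemma union_eq_sup : sumGraph n (S ∪ T) = sumGraph n S ⊔ sumGraph n T := by
  ext u v
  simp only [adj_iff, sup_adj, Set.mem_union, and_or_left]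

lemma ncard_edgeSet_singleton (s : ℕ) :
    (sumGraph n {s}).edgeSet.ncard = (s + 1) / 2 - (s + 1 - n) := by
  rw [← Set.ncard_Ico_nat, eq_comm]
  refine Set.ncard_congr (fun i hi => s(⟨i, by grind⟩, ⟨s - i, by grind⟩)) ?_ ?_ ?_
  · intro i hi
    simp only [Set.mem_Ico] at hi
    simp only [mem_edgeSet, adj_iff, ne_eq, Fin.ext_iff, Set.mem_singleton_iff]
    omega
  · intro i j hi hj hij
    simp only [Set.mem_Ico] at hi hj
    simp only [Sym2.eq_iff, Fin.ext_iff] at hij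
    omega
  · intro e he
    induction e using Sym2.ind with
    | h u v =>
    simp only [mem_edgeSet, adj_iff, ne_eq, Fin.ext_iff, Set.mem_singleton_iff] at he
    rcases Nat.lt_or_gt_of_ne he.1 with h | h
    · refine ⟨u, by simp only [Set.mem_Ico]; omega, ?_⟩
      simp only [Sym2.eq_iff, Fin.ext_iff, true_and]
      omega
    · refine ⟨v, by simp only [Set.mem_Ico]; omega, ?_⟩
      simp only [Sym2.eq_iff, Fin.ext_iff, true_and]
      omega

lemma ncard_edgeSet_union (h : Disjoint S T) :
    (sumGraph n (S ∪ T)).edgeSet.ncard =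
      (sumGraph n S).edgeSet.ncard + (sumGraph n T).edgeSet.ncard := by
  rw [union_eq_sup, edgeSet_sup]
  refine Set.ncard_union_eq ?_ (Set.toFinite _) (Set.toFinite _)
  rw [Set.disjoint_left]
  intro e
  induction e using Sym2.ind with
  | h u v => exact fun hS hT => h.ne_of_mem hS.2 hT.2 rfl

lemma reachable_of_add_mem {u v : Fin n} (h : (u : ℕ) + v ∈ S) :
    (sumGraph n S).Reachable u v := by
  by_cases huv : u = v
  · exact huv ▸ Reachable.refl u
  · exact Adj.reachable ⟨huv, h⟩

lemma reachable_add_mod {a : ℕ} (ha : a ≤ n) (hS : {a - 1, n - 1, n + a - 1} ⊆ S)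
    (u : Fin n) :
    (sumGraph n S).Reachable u ⟨(u + a) % n, Nat.mod_lt _ u.pos⟩ := by
  have hu := u.isLt
  let w : Fin n := ⟨n - 1 - u, by omega⟩
  refine (reachable_of_add_mem (v := w) (hS ?_)).trans (reachable_of_add_mem (hS ?_)) <;>
    simp only [w, Set.mem_insert_iff, Set.mem_singleton_iff]
  · omega
  by_cases hlt : u + a < n
  · rw [Nat.mod_eq_of_lt hlt]
    omega
  · rw [Nat.mod_eq_sub_mod (by omega), Nat.mod_eq_of_lt (by omega)]
    omega

lemma natCast_eq_zero_or_neg_one_of_reachable {d : ℕ} (hS : ∀ s ∈ S, d ∣ s + 1)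
    {u v : Fin n} (h : (sumGraph n S).Reachable u v)
    (hu : ((u : ℕ) : ZMod d) = 0 ∨ ((u : ℕ) : ZMod d) = -1) :
    ((v : ℕ) : ZMod d) = 0 ∨ ((v : ℕ) : ZMod d) = -1 := by
  obtain ⟨p⟩ := h
  induction p with
  | nil => exact hu
  | @cons x y _ hxy _ ih =>
    apply ih
    have hsum : ((x : ℕ) : ZMod d) + (y : ℕ) + 1 = 0 := by
      exact_mod_cast (ZMod.natCast_eq_zero_iff _ d).2 (hS _ hxy.2)
    rcases hu with hx | hx
    · right; linear_combination hsum - hx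
    · left; linear_combination hsum - hx

lemma not_connected_of_dvd_succ {d : ℕ} (hd : 3 ≤ d) (hn : 2 ≤ n)
    (hS : ∀ s ∈ S, d ∣ s + 1) :
    ¬ (sumGraph n S).Connected := by
  intro hconn
  have h01 := natCast_eq_zero_or_neg_one_of_reachable hS
    (hconn.preconnected ⟨0, by omega⟩ ⟨1, hn⟩)
    (Or.inl Nat.cast_zero)
  have hdvd : d ∣ 1 ∨ d ∣ 2 := by
    simp only [← ZMod.natCast_eq_zero_iff]
    push_cast at h01 ⊢
    rcases h01 with h | h
    · exact Or.inl h
    · exact Or.inr (by linear_combination h)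
  rcases hdvd with h | h
  · exact absurd (Nat.le_of_dvd one_pos h) (by omega)
  · exact absurd (Nat.le_of_dvd two_pos h) (by omega)

end sumGraph

lemma SimpleGraph.connected_of_reachable_add_mod {n a : ℕ} {G : SimpleGraph (Fin n)} (hn : 0 < n)
    (hcop : a.Coprime n) (h : ∀ u : Fin n, G.Reachable u ⟨(u + a) % n, Nat.mod_lt _ u.pos⟩) :
    G.Connected := by
  have hiter : ∀ (k : ℕ) (u : Fin n), G.Reachable u ⟨(u + a * k) % n, Nat.mod_lt _ hn⟩ := by
    intro k
    induction k with
    | zero => intro u; simp [Nat.mod_eq_of_lt u.isLt]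
    | succ k ih =>
      intro u
      refine (ih u).trans ?_
      convert h _ using 2
      rw [Nat.mod_add_mod, mul_add_one, add_assoc]
  rw [connected_iff_exists_forall_reachable]
  refine ⟨⟨0, hn⟩, fun v => ?_⟩
  obtain ⟨k, -, hk⟩ := Nat.exists_mul_mod_eq_of_coprime v hcop hn.ne'
  convert hiter k ⟨0, hn⟩
  simp [hk, Nat.mod_eq_of_lt v.isLt]

lemma meander_pair_rel_iff {a b x y : ℕ} (hx : x < a + b) (hy : y < a + b) (hxy : x ≠ y) :
    ((∃ k : Fin [a, b].length, ∃ i < [a, b].get k,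
        x = ([a, b].take k).sum + i ∧ y = ([a, b].take k).sum + ([a, b].get k - 1 - i))
      ∨ x + y = [a, b].sum - 1) ↔ x + y ∈ ({a - 1, a + b - 1, 2 * a + b - 1} : Set ℕ) := by
  simp only [Set.mem_insert_iff, Set.mem_singleton_iff, List.sum_cons, List.sum_nil, add_zero]
  constructor
  · rintro (⟨⟨k, hk⟩, i, hi, rfl, rfl⟩ | h)
    · simp only [List.length_cons, List.length_nil] at hk
      interval_cases k
      · simp only [List.get, List.take, List.sum_nil] at hi ⊢; omega
      · simp only [List.get, List.take, List.sum_cons, List.sum_nil] at hi ⊢; omega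
    · omega
  · rintro (h | h | h)
    · refine Or.inl ⟨⟨0, by simp⟩, x, ?_, ?_, ?_⟩ <;>
        simp only [List.get, List.take, List.sum_nil] <;> omega
    · exact Or.inr h
    · refine Or.inl ⟨⟨1, by simp⟩, x - a, ?_, ?_, ?_⟩ <;>
        simp only [List.get, List.take, List.sum_cons, List.sum_nil] <;> omega

lemma meander_pair_eq (a b : ℕ) :
    meander [a, b] = sumGraph _ {a - 1, a + b - 1, 2 * a + b - 1} := by
  ext u v
  have hu := u.isLt
  have hv := v.isLt
  simp only [List.sum_cons, List.sum_nil, add_zero] at hu hv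
  rw [meander, fromRel_adj, sumGraph.adj_iff]
  refine and_congr_right fun hne => ?_
  have hne' : (u : ℕ) ≠ v := Fin.val_ne_of_ne hne
  rw [meander_pair_rel_iff hu hv hne', meander_pair_rel_iff hv hu hne'.symm, add_comm (v : ℕ),
    or_self]

section MeanderPair

variable {a b : ℕ}

lemma ncard_edgeSet_meander_pair (ha : 0 < a) (hb : 0 < b) :
    (meander [a, b]).edgeSet.ncard = a / 2 + (a + b) / 2 + b / 2 := by
  have hn : [a, b].sum = a + b := by simp
  rw [meander_pair_eq, Set.insert_eq, Set.insert_eq, sumGraph.ncard_edgeSet_union,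
    sumGraph.ncard_edgeSet_union, sumGraph.ncard_edgeSet_singleton,
    sumGraph.ncard_edgeSet_singleton, sumGraph.ncard_edgeSet_singleton, hn]
  · have h1 : a - 1 + 1 = a := by omega
    have h2 : a + b - 1 + 1 = a + b := by omega
    have h3 : 2 * a + b - 1 + 1 = 2 * a + b := by omega
    have h4 : (2 * a + b) / 2 = a + b / 2 := by omega
    rw [h1, h2, h3, h4]
    omega
  all_goals simp only [Set.disjoint_singleton_left, Set.mem_union, Set.mem_singleton_iff]; omega

lemma meander_pair_connected (ha : 0 < a) (hcop : a.Coprime b) : (meander [a, b]).Connected := by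
  have hn : [a, b].sum = a + b := by simp
  rw [meander_pair_eq]
  refine connected_of_reachable_add_mod (a := a) (by omega)
    (by rwa [hn, Nat.coprime_self_add_right])
    (sumGraph.reachable_add_mod (by omega) ?_)
  intro s
  simp only [hn, Set.mem_insert_iff, Set.mem_singleton_iff]
  omega

lemma meander_pair_not_connected (ha : 0 < a) (hd : 3 ≤ a.gcd b) :
    ¬ (meander [a, b]).Connected := by
  have hn : [a, b].sum = a + b := by simp
  have hda := Nat.gcd_dvd_left a b
  have hdb := Nat.gcd_dvd_right a b
  rw [meander_pair_eq]
  refine sumGraph.not_connected_of_dvd_succ hd (by have := Nat.gcd_le_left b ha; omega) ?_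
  simp only [Set.mem_insert_iff, Set.mem_singleton_iff, forall_eq_or_imp, forall_eq]
  refine ⟨?_, ?_, ?_⟩
  · rwa [Nat.sub_add_cancel ha]
  · rw [Nat.sub_add_cancel (by omega)]; exact dvd_add hda hdb
  · rw [Nat.sub_add_cancel (by omega)]; exact dvd_add (dvd_mul_of_dvd_right hda 2) hdb

end MeanderPair

lemma isFrobenius_iff_isTree {V : Type*} {G : SimpleGraph V} : IsFrobenius G ↔ G.IsTree :=
  ⟨fun ⟨hc, ha⟩ => ⟨hc, ha⟩, fun h => ⟨h.1, h.2⟩⟩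

/-- Elashvili / Coll–Gerstenhaber–Magnant: the meander of type `a|b` is Frobenius
if and only if `gcd(a, b) = 1`. -/
theorem meander_two_blocks_frobenius_iff (a b : ℕ) (ha : 0 < a) (hb : 0 < b) :
    IsFrobenius (meander [a, b]) ↔ Nat.gcd a b = 1 := by
  have hn : [a, b].sum = a + b := by simp
  have hd := Nat.gcd_pos_of_pos_left b ha
  rw [isFrobenius_iff_isTree, isTree_iff_connected_and_card, Nat.card_coe_set_eq,
    ncard_edgeSet_meander_pair ha hb, Nat.card_fin]
  constructor
  · rintro ⟨hconn, hcard⟩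
    have h3 : Nat.gcd a b < 3 := by
      by_contra! h3
      exact meander_pair_not_connected ha h3 hconn
    have h2 : Nat.gcd a b ≠ 2 := fun h2 => by
      have := h2 ▸ Nat.gcd_dvd_left a b
      have := h2 ▸ Nat.gcd_dvd_right a b
      omega
    omega
  · intro hcop
    refine ⟨meander_pair_connected ha hcop, ?_⟩
    have : ¬ (2 ∣ a ∧ 2 ∣ b) := fun h2 => by
      have := Nat.dvd_gcd h2.1 h2.2
      omega
    omega
end

section
/- Let a, b and c be positive integers. The meander of type a|b|c (three top blocks of sizes a, b, c, one bottom block of size a+b+c) is Frobenius — that is, its meander graph is connected and acyclic — if and only if gcd(a+b, b+c) = 1. -/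
/-!
The neighbours of a vertex `v` are `v.rev` (bottom arc) and `topReflect v` (its mirror image in
its top block), whenever these differ from `v`. So every degree is at most two, and a connected
finite graph of maximum degree two is acyclic iff some vertex has degree at most one, i.e. is
fixed by one of the two reflections or has `v.rev = topReflect v`.

On `[0, n)` the composite `topReflect ∘ rev` is the first-return map of the rotation
`x ↦ x + (a + b)` of `ℤ / ((a + b) + (b + c))`, so when `gcd(a + b, b + c) = 1` everything is
reachable from `0`; some block then has odd length, and its midpoint is a leaf. Conversely every
edge `{u, v}` has `u + v + 1 ≡ n` modulo `g = gcd(a + b, b + c)`, so the component of `0` only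
meets the residues of `0` and `n - 1`; connectedness forces `g = 2` and `a, b, c` even, and then
no vertex has degree at most one.
-/

open Finset

namespace SimpleGraph

variable {V : Type*} {G : SimpleGraph V}

theorem Connected.isAcyclic_iff_exists_degree_le_one [Fintype V] [DecidableRel G.Adj]
    (hG : G.Connected) (hdeg : ∀ v, G.degree v ≤ 2) :
    G.IsAcyclic ↔ ∃ v, G.degree v ≤ 1 := by
  have hsum := G.sum_degrees_eq_twice_card_edges
  have hcard : Nat.card G.edgeSet = #G.edgeFinset := by
    rw [Nat.card_eq_fintype_card, ← edgeFinset_card]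
  have hV : Nat.card V = Fintype.card V := Nat.card_eq_fintype_card
  constructor
  · intro hacyc
    have htree := (isTree_iff_connected_and_card.1 ⟨hG, hacyc⟩).2
    by_contra! hleaf
    have : ∑ _v : V, 2 ≤ ∑ v, G.degree v := Finset.sum_le_sum fun v _ => hleaf v
    simp only [Finset.sum_const, Finset.card_univ, smul_eq_mul] at this
    omega
  · rintro ⟨v₀, hv₀⟩
    refine (isTree_iff_connected_and_card.2 ⟨hG, ?_⟩).isAcyclic
    have hlow := hG.card_vert_le_card_edgeSet_add_one
    have : ∑ v, G.degree v < ∑ _v : V, 2 :=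
      Finset.sum_lt_sum (fun v _ => hdeg v) ⟨v₀, Finset.mem_univ _, by omega⟩
    simp only [Finset.sum_const, Finset.card_univ, smul_eq_mul] at this
    omega

section TwoMaps

variable [DecidableEq V] {f g : V → V}

theorem neighborFinset_eq_erase_pair (h : ∀ u v, G.Adj u v ↔ u ≠ v ∧ (v = f u ∨ v = g u))
    (v : V) [Fintype (G.neighborSet v)] :
    G.neighborFinset v = ({f v, g v} : Finset V).erase v := by
  ext w
  rw [mem_neighborFinset, h, Finset.mem_erase, Finset.mem_insert, Finset.mem_singleton, ne_comm]

theorem degree_le_two_of_adj_iff (h : ∀ u v, G.Adj u v ↔ u ≠ v ∧ (v = f u ∨ v = g u))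
    (v : V) [Fintype (G.neighborSet v)] : G.degree v ≤ 2 := by
  rw [← card_neighborFinset_eq_degree, neighborFinset_eq_erase_pair h]
  exact (Finset.card_erase_le).trans Finset.card_le_two

theorem degree_le_one_iff_of_adj_iff (h : ∀ u v, G.Adj u v ↔ u ≠ v ∧ (v = f u ∨ v = g u))
    (v : V) [Fintype (G.neighborSet v)] : G.degree v ≤ 1 ↔ f v = v ∨ g v = v ∨ f v = g v := by
  rw [← card_neighborFinset_eq_degree, neighborFinset_eq_erase_pair h]
  constructor
  · intro hle
    by_contra! hne
    rw [Finset.erase_eq_of_notMem (by simp [hne.1.symm, hne.2.1.symm]),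
      Finset.card_pair hne.2.2] at hle
    omega
  · intro hfix
    rw [Finset.card_le_one]
    simp only [Finset.mem_erase, Finset.mem_insert, Finset.mem_singleton]
    grind

end TwoMaps

theorem reachable_of_adj_iff {f g : V → V} (h : ∀ u v, G.Adj u v ↔ u ≠ v ∧ (v = f u ∨ v = g u))
    {v w : V} (hw : w = f v ∨ w = g v) : G.Reachable v w := by
  by_cases hvw : v = w
  · rw [hvw]
  · exact ((h v w).2 ⟨hvw, hw⟩).reachable

end SimpleGraph

theorem Nat.Coprime.mem_of_add_mod_mem {K N : ℕ} (hK : K.Coprime N) {S : Set ℕ} (h0 : 0 ∈ S)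
    (hS : ∀ r ∈ S, (r + K) % N ∈ S) {r : ℕ} (hr : r < N) : r ∈ S := by
  have hmul : ∀ t, K * t % N ∈ S := by
    intro t
    induction t with
    | zero => simpa using h0
    | succ t ih => rw [Nat.mul_succ, ← Nat.mod_add_mod]; exact hS _ ih
  obtain ⟨t, -, ht⟩ := Nat.exists_mul_mod_eq_of_coprime r hK (by omega)
  rw [← Nat.mod_eq_of_lt hr, ← ht]
  exact hmul t

namespace Meander

variable {a b c : ℕ}

theorem val_lt (v : Fin [a, b, c].sum) : (v : ℕ) < a + b + c := by
  simpa [add_assoc] using v.isLt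

theorem val_rev (v : Fin [a, b, c].sum) : (v.rev : ℕ) = a + b + c - 1 - v := by
  rw [Fin.val_rev]
  simp only [List.sum_cons, List.sum_nil]
  omega

def blockReflect (a b c x : ℕ) : ℕ :=
  if x < a then a - 1 - x else if x < a + b then 2 * a + b - 1 - x else 2 * (a + b) + c - 1 - x

def topReflect (v : Fin [a, b, c].sum) : Fin [a, b, c].sum :=
  ⟨blockReflect a b c v, by
    have := val_lt v
    simp only [List.sum_cons, List.sum_nil]
    unfold blockReflect
    split_ifs <;> omega⟩

theorem val_topReflect (v : Fin [a, b, c].sum) : (topReflect v : ℕ) = blockReflect a b c v :=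
  rfl

theorem exists_mirror_iff {s m u v : ℕ} :
    (∃ i < m, u = s + i ∧ v = s + (m - 1 - i)) ↔ s ≤ u ∧ u < s + m ∧ u + v + 1 = 2 * s + m :=
  ⟨by rintro ⟨i, hi, rfl, rfl⟩; omega, fun h => ⟨u - s, by omega, by omega, by omega⟩⟩

theorem adj_iff (u v : Fin [a, b, c].sum) :
    (meander [a, b, c]).Adj u v ↔ u ≠ v ∧ (v = u.rev ∨ v = topReflect u) := by
  have hu := val_lt u
  have hv := val_lt v
  rw [meander, SimpleGraph.fromRel_adj, Fin.ext_iff, Fin.ext_iff, Fin.val_rev, val_topReflect]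
  refine and_congr_right fun hne => ?_
  simp only [List.length_cons, List.length_nil, Fin.exists_fin_succ, Fin.exists_fin_zero]
  simp only [List.get_eq_getElem, Fin.val_zero, Fin.val_succ, exists_mirror_iff]
  simp only [List.take_zero, List.sum_nil, List.sum_cons, Nat.add_zero, zero_le,
    List.getElem_cons_zero, zero_add, mul_zero, true_and, List.take_succ_cons, add_zero,
    List.getElem_cons_succ, Nat.reduceAdd, or_false]
  unfold blockReflect
  split_ifs <;> omega

theorem reachable_topReflect_rev (v : Fin [a, b, c].sum) :
    (meander [a, b, c]).Reachable v (topReflect v.rev) :=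
  (SimpleGraph.reachable_of_adj_iff adj_iff (Or.inl rfl)).trans
    (SimpleGraph.reachable_of_adj_iff adj_iff (Or.inr rfl))

theorem val_topReflect_rev (v : Fin [a, b, c].sum) :
    (topReflect v.rev : ℕ) =
      if (v : ℕ) < c then v + (a + b) else if (v : ℕ) < b + c then v + a - c else v - (b + c) := by
  have := val_lt v
  rw [val_topReflect, val_rev, blockReflect]
  split_ifs <;> omega

theorem connected_of_coprime (h : (a + b).Coprime (b + c)) : (meander [a, b, c]).Connected := by
  have hn : 0 < a + b + c := by
    by_contra hn
    obtain ⟨rfl, rfl, rfl⟩ : a = 0 ∧ b = 0 ∧ c = 0 := by omega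
    simp at h
  set N := (a + b) + (b + c)
  have hK : (a + b).Coprime N := Nat.coprime_self_add_right.2 h
  have hmod : ∀ x < 2 * N, x % N = if x < N then x else x - N := fun x hx => by
    split_ifs with hxN
    · exact Nat.mod_eq_of_lt hxN
    · rw [Nat.mod_eq_sub_mod (by omega), Nat.mod_eq_of_lt (by omega)]
  let v₀ : Fin [a, b, c].sum := ⟨0, by simpa [add_assoc] using hn⟩
  -- `v + (a + b)` with `c ≤ v < b + c` is the point of `[n, N)` that the rotation visits between
  -- `v` and `topReflect v.rev`.
  let S : Set ℕ := {r | ∃ v, (meander [a, b, c]).Reachable v₀ v ∧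
    (r = v ∨ (c ≤ v ∧ v < b + c ∧ r = v + (a + b)))}
  have hS : ∀ r ∈ S, (r + (a + b)) % N ∈ S := by
    rintro r ⟨v, hv, hr⟩
    have := val_lt v
    have hρ := val_topReflect_rev v
    rw [hmod _ (by omega)]
    by_cases hB : r = v ∧ c ≤ v ∧ v < b + c
    · exact ⟨v, hv, Or.inr ⟨hB.2.1, hB.2.2, by split_ifs <;> omega⟩⟩
    · refine ⟨topReflect v.rev, hv.trans (reachable_topReflect_rev v), Or.inl ?_⟩
      split_ifs at hρ ⊢ <;> omega
  have hreach : ∀ v, (meander [a, b, c]).Reachable v₀ v := fun v => by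
    have := val_lt v
    obtain ⟨w, hw, hvw | ⟨hcw, -, hvw⟩⟩ :=
      hK.mem_of_add_mod_mem (S := S) ⟨v₀, .refl _, Or.inl rfl⟩ hS (r := v) (by omega)
    · rwa [Fin.ext hvw]
    · omega
  exact (SimpleGraph.connected_iff _).2 ⟨fun u v => (hreach u).symm.trans (hreach v), ⟨v₀⟩⟩

theorem cast_add_add_one_eq_of_adj {g : ℕ} (hab : g ∣ a + b) (hbc : g ∣ b + c)
    {u v : Fin [a, b, c].sum} (h : (meander [a, b, c]).Adj u v) :
    ((u : ℕ) + v + 1 : ZMod g) = a + b + c := by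
  have hab' : (a + b : ZMod g) = 0 := by exact_mod_cast (ZMod.natCast_eq_zero_iff _ _).2 hab
  have hbc' : (b + c : ZMod g) = 0 := by exact_mod_cast (ZMod.natCast_eq_zero_iff _ _).2 hbc
  have := val_lt u
  obtain ⟨-, hv | hv⟩ := (adj_iff u v).1 h <;> rw [Fin.ext_iff] at hv
  · rw [val_rev] at hv
    have huv : (u : ℕ) + v + 1 = a + b + c := by omega
    exact_mod_cast congrArg (Nat.cast : ℕ → ZMod g) huv
  · rw [val_topReflect, blockReflect] at hv
    obtain huv | huv | huv : (u : ℕ) + v + 1 + (b + c) = a + b + c ∨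
        (u : ℕ) + v + 1 + (b + c) = a + b + c + (a + b) ∨
        (u : ℕ) + v + 1 = a + b + c + (a + b) := by
      split_ifs at hv <;> omega
    all_goals
      have := congrArg (Nat.cast : ℕ → ZMod g) huv
      push_cast at this
    · linear_combination this - hbc'
    · linear_combination this - hbc' + hab'
    · linear_combination this + hab'

theorem cast_eq_zero_or_of_reachable {g : ℕ} (hab : g ∣ a + b) (hbc : g ∣ b + c)
    {u v : Fin [a, b, c].sum} (h : (meander [a, b, c]).Reachable u v)
    (hu : ((u : ℕ) : ZMod g) = 0 ∨ ((u : ℕ) : ZMod g) + 1 = a + b + c) :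
    ((v : ℕ) : ZMod g) = 0 ∨ ((v : ℕ) : ZMod g) + 1 = a + b + c := by
  rw [SimpleGraph.reachable_iff_reflTransGen] at h
  induction h with
  | refl => exact hu
  | tail _ hadj ih =>
    have := cast_add_add_one_eq_of_adj hab hbc hadj
    rcases ih with h0 | h1
    · exact Or.inr (by linear_combination this - h0)
    · exact Or.inl (by linear_combination this - h1)

theorem eq_two_and_even_of_connected {g : ℕ} (hg : 2 ≤ g) (hab : g ∣ a + b) (hbc : g ∣ b + c)
    (hG : (meander [a, b, c]).Connected) : g = 2 ∧ Even a ∧ Even b ∧ Even c := by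
  obtain ⟨v⟩ := hG.nonempty
  have hgn : g ≤ a + b + c := by
    have := val_lt v
    rcases Nat.eq_zero_or_pos (a + b) with h0 | h0
    · have := Nat.le_of_dvd (by omega) hbc; omega
    · have := Nat.le_of_dvd h0 hab; omega
  have hres (x : ℕ) (hx : x < a + b + c) :
      (x : ZMod g) = 0 ∨ (x : ZMod g) + 1 = a + b + c :=
    cast_eq_zero_or_of_reachable hab hbc (hG.preconnected ⟨0, by simp; omega⟩ ⟨x, by simp; omega⟩)
      (Or.inl Nat.cast_zero)
  have hnot (x : ℕ) (hx0 : 0 < x) (hxg : x < g) : (x : ZMod g) ≠ 0 := fun h =>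
    absurd (Nat.le_of_dvd hx0 ((ZMod.natCast_eq_zero_iff _ _).1 h)) (by omega)
  have h2 : (2 : ZMod g) = a + b + c := by
    have := (hres 1 (by omega)).resolve_left (hnot 1 one_pos (by omega))
    rw [Nat.cast_one] at this
    linear_combination this
  have hn : (a + b + c : ZMod g) = 0 := by
    rw [← (hres (g - 1) (by omega)).resolve_left (hnot (g - 1) (by omega) (by omega)),
      Nat.cast_pred (by omega), ZMod.natCast_self]
    ring
  have hg2 : g ∣ 2 := (ZMod.natCast_eq_zero_iff _ _).1 (by rw [Nat.cast_ofNat, h2, hn])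
  obtain rfl : g = 2 := le_antisymm (Nat.le_of_dvd two_pos hg2) hg
  have hn2 : 2 ∣ a + b + c := (ZMod.natCast_eq_zero_iff _ _).1 (by push_cast; exact hn)
  simp only [Nat.even_iff, true_and]
  omega

section Degree

variable [DecidableRel (meander [a, b, c]).Adj]

theorem degree_le_two (v : Fin [a, b, c].sum) : (meander [a, b, c]).degree v ≤ 2 :=
  SimpleGraph.degree_le_two_of_adj_iff adj_iff v

theorem exists_degree_le_one (h : ¬(Even a ∧ Even b ∧ Even c)) :
    ∃ v, (meander [a, b, c]).degree v ≤ 1 := by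
  simp only [Nat.even_iff] at h
  obtain ⟨m, hm, hmid⟩ : ∃ m < a + b + c, blockReflect a b c m = m := by
    refine ⟨if a % 2 = 1 then a / 2 else if b % 2 = 1 then a + b / 2 else a + b + c / 2, ?_, ?_⟩
    · split_ifs <;> omega
    · unfold blockReflect
      split_ifs <;> omega
  exact ⟨⟨m, by simpa [add_assoc] using hm⟩,
    (SimpleGraph.degree_le_one_iff_of_adj_iff adj_iff _).2 (Or.inr (Or.inl (Fin.ext hmid)))⟩

theorem two_le_degree (ha : 0 < a) (hc : 0 < c) (heven : Even a ∧ Even b ∧ Even c)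
    (hac : a = c → b = 0) (v : Fin [a, b, c].sum) : 2 ≤ (meander [a, b, c]).degree v := by
  have := val_lt v
  simp only [Nat.even_iff] at heven
  rw [← not_lt, Nat.lt_succ_iff, SimpleGraph.degree_le_one_iff_of_adj_iff adj_iff]
  simp only [Fin.ext_iff, val_rev, val_topReflect, blockReflect]
  split_ifs <;> omega

end Degree

theorem coprime_of_isFrobenius (ha : 0 < a) (hc : 0 < c) (h : IsFrobenius (meander [a, b, c])) :
    (a + b).Coprime (b + c) := by
  classical
  obtain ⟨hconn, hacyc⟩ := h
  by_contra hg
  have hg2 : 2 ≤ Nat.gcd (a + b) (b + c) := by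
    have := Nat.gcd_pos_of_pos_left (b + c) (by omega : 0 < a + b)
    rw [Nat.Coprime] at hg
    omega
  obtain ⟨hg, heven⟩ :=
    eq_two_and_even_of_connected hg2 (Nat.gcd_dvd_left _ _) (Nat.gcd_dvd_right _ _) hconn
  have hac : a = c → b = 0 := by
    rintro rfl
    rw [Nat.add_comm b a, Nat.gcd_self] at hg
    simp only [Nat.even_iff] at heven
    omega
  obtain ⟨v, hv⟩ := (hconn.isAcyclic_iff_exists_degree_le_one degree_le_two).1 hacyc
  have := two_le_degree ha hc heven hac v
  omega

theorem isFrobenius_of_coprime (h : (a + b).Coprime (b + c)) :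
    IsFrobenius (meander [a, b, c]) := by
  classical
  have hconn := connected_of_coprime h
  refine ⟨hconn, (hconn.isAcyclic_iff_exists_degree_le_one degree_le_two).2
    (exists_degree_le_one fun ⟨ha2, hb2, hc2⟩ => ?_)⟩
  exact absurd (Nat.eq_one_of_dvd_coprimes h (ha2.add hb2).two_dvd (hb2.add hc2).two_dvd)
    (by decide)

end Meander

theorem meander_three_blocks_frobenius_iff_general (a b c : ℕ)
    (ha : 0 < a) (hc : 0 < c) :
    IsFrobenius (meander [a, b, c]) ↔ Nat.gcd (a + b) (b + c) = 1 :=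
  ⟨Meander.coprime_of_isFrobenius ha hc, Meander.isFrobenius_of_coprime⟩

/-- Coll–Gerstenhaber–Magnant: the meander of type `a|b|c` is Frobenius
if and only if `gcd(a + b, b + c) = 1`. -/
theorem meander_three_blocks_frobenius_iff (a b c : ℕ)
    (ha : 0 < a) (hb : 0 < b) (hc : 0 < c) :
    IsFrobenius (meander [a, b, c]) ↔ Nat.gcd (a + b) (b + c) = 1 :=
  meander_three_blocks_frobenius_iff_general a b c ha hc
end

section
/- For every integer k ≥ 1, the meander of type 2|2|⋯|2|1 (with k top blocks of size 2 followed by one top block of size 1, on 2k+1 vertices) is Frobenius; that is, its meander graph is connected and acyclic. -/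
/-! Listing the vertices as `2k, 0, 1, 2k - 1, 2k - 2, 2, 3, 2k - 3, 2k - 4, 4, 5, …` alternates
bottom edges `j — 2k - j` with top edges `2i — 2i + 1`, ends at the middle vertex `k`, and visits
every vertex exactly once. Since these are all the edges of the meander, it is isomorphic to the
path graph on `2k + 1` vertices, which is connected and acyclic (every edge of a path is a bridge).
-/

open SimpleGraph

namespace SimpleGraph

theorem pathGraph_isAcyclic (n : ℕ) : (pathGraph n).IsAcyclic := by
  refine isAcyclic_iff_forall_adj_isBridge.mpr ?_
  suffices h : ∀ u v : Fin n, u.val + 1 = v.val → (pathGraph n).IsBridge s(u, v) by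
    intro u v huv
    rcases pathGraph_adj.mp huv with huv | hvu
    · exact h u v huv
    · exact Sym2.eq_swap ▸ h v u hvu
  intro u v huv hreach
  have hclosed : ∀ a b : Fin n,
      ((pathGraph n).deleteEdges {s(u, v)}).Adj a b → a ≤ u → b ≤ u := by
    intro a b hab ha
    rw [deleteEdges_adj, pathGraph_adj, Set.mem_singleton_iff] at hab
    by_contra hb
    rw [not_le, Fin.lt_def] at hb
    rw [Fin.le_def] at ha
    have hau : a = u := by ext; omega
    have hbv : b = v := by ext; omega
    exact hab.2 (by rw [hau, hbv])
  have hreach_le : ∀ b, ((pathGraph n).deleteEdges {s(u, v)}).Reachable u b → b ≤ u := by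
    intro b hb
    rw [reachable_iff_reflTransGen] at hb
    induction hb with
    | refl => exact le_rfl
    | tail _ hbc ih => exact hclosed _ _ hbc ih
  exact absurd (hreach_le v hreach) (by rw [not_le, Fin.lt_def]; omega)

end SimpleGraph

section TwosThenOne

variable (k : ℕ)

theorem sum_replicate_two_append_one : (List.replicate k 2 ++ [1]).sum = 2 * k + 1 := by
  simp [List.sum_replicate, mul_comm]

theorem getElem_replicate_two_append_one {j : ℕ} (hj : j < (List.replicate k 2 ++ [1]).length) :
    (List.replicate k 2 ++ [1])[j] = if j < k then 2 else 1 := by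
  simp only [List.length_append, List.length_replicate, List.length_singleton] at hj
  simp only [List.getElem_append, List.length_replicate]
  split_ifs <;> simp

theorem sum_take_replicate_two_append_one {j : ℕ} (hj : j ≤ k) :
    ((List.replicate k 2 ++ [1]).take j).sum = 2 * j := by
  rw [List.take_append_of_le_length (by simpa using hj), List.take_replicate,
    List.sum_replicate, min_eq_left hj, smul_eq_mul, mul_comm]

theorem exists_block_replicate_two_append_one_iff (a b : ℕ) :
    (∃ j : Fin (List.replicate k 2 ++ [1]).length, ∃ i : ℕ,
      i < (List.replicate k 2 ++ [1]).get j ∧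
      a = ((List.replicate k 2 ++ [1]).take j).sum + i ∧
      b = ((List.replicate k 2 ++ [1]).take j).sum + ((List.replicate k 2 ++ [1]).get j - 1 - i))
      ↔ (a / 2 = b / 2 ∧ a ≠ b ∧ a < 2 * k) ∨ (a = 2 * k ∧ b = 2 * k) := by
  constructor
  · rintro ⟨⟨j, hj⟩, i, hi, ha, hb⟩
    simp only [List.length_append, List.length_replicate, List.length_singleton] at hj
    simp only [List.get_eq_getElem, getElem_replicate_two_append_one,
      sum_take_replicate_two_append_one k (Nat.le_of_lt_succ hj)] at hi ha hb
    split_ifs at hi hb <;> omega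
  · intro h
    refine ⟨⟨a / 2, by
      simp only [List.length_append, List.length_replicate, List.length_singleton]; omega⟩,
      a % 2, ?_⟩
    simp only [List.get_eq_getElem, getElem_replicate_two_append_one,
      sum_take_replicate_two_append_one k (show a / 2 ≤ k by omega)]
    split_ifs <;> omega

theorem meander_replicate_two_append_one_adj (u v : Fin (List.replicate k 2 ++ [1]).sum) :
    (meander (List.replicate k 2 ++ [1])).Adj u v ↔
      (u : ℕ) ≠ v ∧ ((u : ℕ) + v = 2 * k ∨ (u : ℕ) / 2 = v / 2) := by
  have hsum := sum_replicate_two_append_one k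
  have hu := u.isLt
  have hv := v.isLt
  rw [meander, fromRel_adj, Fin.ne_iff_vne, exists_block_replicate_two_append_one_iff,
    exists_block_replicate_two_append_one_iff]
  omega

end TwosThenOne

/-- The `t`-th vertex of the walk `2k, 0, 1, 2k - 1, 2k - 2, 2, 3, 2k - 3, …`, which alternates
bottom and top edges. -/
def twosOnePathVertex (k t : ℕ) : ℕ :=
  if t % 4 = 1 ∨ t % 4 = 2 then t / 2 else 2 * k - t / 2

theorem twosOnePathVertex_lt {k t : ℕ} (ht : t < 2 * k + 1) :
    twosOnePathVertex k t < 2 * k + 1 := by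
  unfold twosOnePathVertex; split_ifs <;> omega

theorem twosOnePathVertex_injOn (k : ℕ) :
    Set.InjOn (twosOnePathVertex k) (Set.Iio (2 * k + 1)) := by
  intro s hs t ht h
  rw [Set.mem_Iio] at hs ht
  unfold twosOnePathVertex at h
  split_ifs at h <;> omega

theorem twosOnePathVertex_adj_iff {k s t : ℕ} (hs : s < 2 * k + 1) (ht : t < 2 * k + 1) :
    twosOnePathVertex k s ≠ twosOnePathVertex k t ∧
        (twosOnePathVertex k s + twosOnePathVertex k t = 2 * k ∨
          twosOnePathVertex k s / 2 = twosOnePathVertex k t / 2) ↔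
      s + 1 = t ∨ t + 1 = s := by
  unfold twosOnePathVertex; split_ifs <;> omega

noncomputable def twosOnePathIso (k : ℕ) :
    pathGraph (2 * k + 1) ≃g meander (List.replicate k 2 ++ [1]) where
  __ := Equiv.ofBijective
    (fun t => ⟨twosOnePathVertex k t,
      (twosOnePathVertex_lt t.isLt).trans_eq (sum_replicate_two_append_one k).symm⟩)
    (by
      rw [Fintype.bijective_iff_injective_and_card, Fintype.card_fin, Fintype.card_fin]
      exact ⟨fun s t h => Fin.ext (twosOnePathVertex_injOn k s.isLt t.isLt (Fin.val_eq_of_eq h)),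
        (sum_replicate_two_append_one k).symm⟩)
  map_rel_iff' {s t} := by
    simp only [Equiv.ofBijective_apply]
    rw [meander_replicate_two_append_one_adj, pathGraph_adj]
    exact twosOnePathVertex_adj_iff s.isLt t.isLt

theorem meander_twos_one_frobenius_general (k : ℕ) :
    IsFrobenius (meander (List.replicate k 2 ++ [1])) :=
  ⟨(twosOnePathIso k).connected_iff.mp (pathGraph_connected _),
    (twosOnePathIso k).isAcyclic_iff.mp (pathGraph_isAcyclic _)⟩

/-- The meander of type `2|2|⋯|2|1` (with `k ≥ 1` blocks of size 2 followed by one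
block of size 1) is Frobenius. -/
theorem meander_twos_one_frobenius (k : ℕ) (hk : 1 ≤ k) :
    IsFrobenius (meander (List.replicate k 2 ++ [1])) :=
  meander_twos_one_frobenius_general k
end

section
/- Let a be a positive integer and k ≥ 1. The meander of type 2a|2a|⋯|2a|a (with k top blocks of size 2a followed by one top block of size a) has exactly ⌈a/2⌉ connected components, of which exactly ⌊a/2⌋ are cycle components. -/
/-!
Cut each block of size `2a` into two half-blocks of size `a`, so that vertex `s + a q` sits at
offset `s < a` in half-block `q ≤ 2k`. A top arc sends `(q, s)` to `(q', a - 1 - s)`, where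
half-blocks `2j` and `2j + 1` are partners and `2k` is its own partner; a bottom arc sends
`(q, s)` to `(2k - q, a - 1 - s)`. Every arc therefore flips the offset, and `min s (a - 1 - s)`
is constant on components. Conversely, a top arc followed by a bottom arc moves an even
half-block `q < 2k` to `2k - 1 - q`, and a second such step moves it to `q + 2`, so each of the
`⌈a/2⌉` values of `min s (a - 1 - s)` gives exactly one component. A vertex has degree 2
unless one of the two involutions fixes it, which forces `s = a - 1 - s`; for `k ≥ 1` its two
partners are never equal. So every component is a cycle except, for odd `a`, the component of
the middle offset.
-/

open Function

namespace SimpleGraph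

variable {V W : Type*} {G : SimpleGraph V} {G' : SimpleGraph W}

lemma Iso.isCycleComponent_connectedComponentEquiv_iff (φ : G ≃g G') (c : G.ConnectedComponent) :
    G'.IsCycleComponent (φ.connectedComponentEquiv c) ↔ G.IsCycleComponent c := by
  simp only [IsCycleComponent, φ.surjective.forall]
  refine forall_congr' fun v => ?_
  have hmk : G'.connectedComponentMk (φ v) =
      φ.connectedComponentEquiv (G.connectedComponentMk v) := rfl
  rw [← φ.image_neighborSet, Set.ncard_image_of_injective _ φ.injective, hmk,
    φ.connectedComponentEquiv.apply_eq_iff_eq]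

lemma Iso.numCycleComponents_eq (φ : G ≃g G') : numCycleComponents G = numCycleComponents G' :=
  Nat.card_congr <| φ.connectedComponentEquiv.subtypeEquiv fun c =>
    (φ.isCycleComponent_connectedComponentEquiv_iff c).symm

def fromMaps (f g : V → V) : SimpleGraph V := fromRel fun x y => y = f x ∨ y = g x

variable {f g : V → V}

lemma reachable_fromMaps_left (x : V) : (fromMaps f g).Reachable x (f x) := by
  by_cases h : x = f x
  · rw [← h]
  · exact Adj.reachable ⟨h, .inl (.inl rfl)⟩

lemma reachable_fromMaps_right (x : V) : (fromMaps f g).Reachable x (g x) := by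
  by_cases h : x = g x
  · rw [← h]
  · exact Adj.reachable ⟨h, .inl (.inr rfl)⟩

lemma Reachable.apply_eq_of_fromMaps {α : Type*} {φ : V → α} (hf : ∀ x, φ (f x) = φ x)
    (hg : ∀ x, φ (g x) = φ x) {x y : V} (h : (fromMaps f g).Reachable x y) : φ x = φ y := by
  rw [reachable_iff_reflTransGen] at h
  induction h with
  | refl => rfl
  | tail _ hadj ih =>
    obtain ⟨-, (rfl | rfl) | (rfl | rfl)⟩ := hadj <;> simpa only [hf, hg] using ih

lemma neighborSet_fromMaps (hf : Involutive f) (hg : Involutive g) (x : V) :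
    (fromMaps f g).neighborSet x = {f x, g x} \ {x} := by
  ext y
  have hfy : x = f y ↔ y = f x := eq_comm.trans hf.eq_iff
  have hgy : x = g y ↔ y = g x := eq_comm.trans hg.eq_iff
  simp only [mem_neighborSet, fromMaps, fromRel_adj, Set.mem_sdiff, Set.mem_insert_iff,
    Set.mem_singleton_iff, hfy, hgy]
  tauto

lemma ncard_neighborSet_fromMaps_eq_two (hf : Involutive f) (hg : Involutive g) {x : V}
    (hfx : f x ≠ x) (hgx : g x ≠ x) (hfg : f x ≠ g x) :
    ((fromMaps f g).neighborSet x).ncard = 2 := by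
  rw [neighborSet_fromMaps hf hg, Set.sdiff_singleton_eq_self (by simp [hfx.symm, hgx.symm]),
    Set.ncard_pair hfg]

lemma ncard_neighborSet_fromMaps_ne_two (hf : Involutive f) (hg : Involutive g) {x : V}
    (hfx : f x = x) : ((fromMaps f g).neighborSet x).ncard ≠ 2 := by
  rw [neighborSet_fromMaps hf hg, hfx, Set.insert_sdiff_of_mem _ (Set.mem_singleton x)]
  exact ((Set.ncard_sdiff_singleton_le _ x).trans_eq (Set.ncard_singleton _)).trans_lt
    one_lt_two |>.ne

end SimpleGraph

open SimpleGraph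

section HalfBlocks

variable (a k : ℕ)

def halfBlockPartner (q : Fin (2 * k + 1)) : Fin (2 * k + 1) :=
  ⟨if (q : ℕ) = 2 * k then q else if (q : ℕ) % 2 = 0 then q + 1 else q - 1,
    by split_ifs <;> omega⟩

lemma halfBlockPartner_involutive : Involutive (halfBlockPartner k) := by
  intro q
  ext
  simp only [halfBlockPartner]
  split_ifs <;> omega

def halfBlockTop (x : Fin (2 * k + 1) × Fin a) : Fin (2 * k + 1) × Fin a :=
  (halfBlockPartner k x.1, x.2.rev)

def halfBlockBottom (x : Fin (2 * k + 1) × Fin a) : Fin (2 * k + 1) × Fin a :=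
  (x.1.rev, x.2.rev)

lemma halfBlockTop_involutive : Involutive (halfBlockTop a k) := fun x => by
  simp [halfBlockTop, halfBlockPartner_involutive k x.1]

lemma halfBlockBottom_involutive : Involutive (halfBlockBottom a k) := fun x => by
  simp [halfBlockBottom]

abbrev halfBlockMeander : SimpleGraph (Fin (2 * k + 1) × Fin a) :=
  fromMaps (halfBlockTop a k) (halfBlockBottom a k)

def foldedOffset (x : Fin (2 * k + 1) × Fin a) : Fin a := min x.2 x.2.rev

variable {a k}

lemma halfBlockPartner_ne_rev (hk : 1 ≤ k) (q : Fin (2 * k + 1)) :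
    halfBlockPartner k q ≠ q.rev := by
  simp only [Ne, Fin.ext_iff, halfBlockPartner, Fin.val_rev]
  split_ifs <;> omega

lemma foldedOffset_le_rev (x : Fin (2 * k + 1) × Fin a) :
    foldedOffset a k x ≤ (foldedOffset a k x).rev := by
  simp only [foldedOffset, Fin.le_def, Fin.val_rev, Fin.coe_min]
  omega

lemma foldedOffset_eq_of_reachable {x y : Fin (2 * k + 1) × Fin a}
    (h : (halfBlockMeander a k).Reachable x y) : foldedOffset a k x = foldedOffset a k y :=
  h.apply_eq_of_fromMaps (fun x => by simp [halfBlockTop, foldedOffset, min_comm])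
    (fun x => by simp [halfBlockBottom, foldedOffset, min_comm])

lemma reachable_halfBlockTop (x : Fin (2 * k + 1) × Fin a) :
    (halfBlockMeander a k).Reachable x (halfBlockTop a k x) :=
  reachable_fromMaps_left x

lemma reachable_halfBlockBottom (x : Fin (2 * k + 1) × Fin a) :
    (halfBlockMeander a k).Reachable x (halfBlockBottom a k x) :=
  reachable_fromMaps_right x

lemma halfBlockTop_last (s : Fin a) : halfBlockTop a k (Fin.last _, s) = (Fin.last _, s.rev) := by
  simp [halfBlockTop, halfBlockPartner, Fin.ext_iff]

lemma reachable_add_two (q : Fin (2 * k + 1)) (hq : (q : ℕ) % 2 = 0) (hlt : (q : ℕ) < 2 * k)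
    (s : Fin a) : (halfBlockMeander a k).Reachable (q, s) (⟨q + 2, by omega⟩, s) := by
  have step (x) : (halfBlockMeander a k).Reachable x (halfBlockBottom a k (halfBlockTop a k x)) :=
    (reachable_halfBlockTop x).trans (reachable_halfBlockBottom _)
  convert (step _).trans (step _) using 1
  ext
  · simp only [halfBlockTop, halfBlockBottom, halfBlockPartner, Fin.val_rev]
    split_ifs <;> omega
  · simp [halfBlockTop, halfBlockBottom]

lemma reachable_last_of_even (s : Fin a) (d : ℕ) :
    ∀ q : Fin (2 * k + 1), (q : ℕ) % 2 = 0 → 2 * k = q + 2 * d →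
      (halfBlockMeander a k).Reachable (q, s) (Fin.last _, s) := by
  induction d with
  | zero =>
    intro q _ hd
    rw [show q = Fin.last _ from Fin.ext (by simp; omega)]
  | succ d ih =>
    intro q hq hd
    exact (reachable_add_two q hq (by omega) s).trans (ih _ (by simp; omega) (by simp; omega))

lemma reachable_last (x : Fin (2 * k + 1) × Fin a) :
    (halfBlockMeander a k).Reachable x (Fin.last _, x.2) := by
  obtain ⟨q, s⟩ := x
  by_cases hq : (q : ℕ) % 2 = 0
  · exact reachable_last_of_even s ((2 * k - q) / 2) q hq (by omega)
  · have h1 := reachable_halfBlockTop (q, s)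
    have h2 := reachable_last_of_even (k := k) s.rev ((2 * k - q + 1) / 2)
      ⟨q - 1, by omega⟩ (by simp; omega) (by simp; omega)
    have h3 := reachable_halfBlockTop (Fin.last (2 * k), s.rev)
    rw [halfBlockTop_last, Fin.rev_rev] at h3
    have htop : halfBlockTop a k (q, s) = (⟨q - 1, by omega⟩, s.rev) := by
      ext
      · simp only [halfBlockTop, halfBlockPartner]
        split_ifs <;> omega
      · rfl
    rw [htop] at h1
    exact h1.trans (h2.trans h3)

lemma reachable_last_foldedOffset (x : Fin (2 * k + 1) × Fin a) :
    (halfBlockMeander a k).Reachable x (Fin.last _, foldedOffset a k x) := by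
  have hflip : (halfBlockMeander a k).Reachable (Fin.last _, x.2) (Fin.last _, x.2.rev) := by
    simpa only [halfBlockTop_last] using reachable_halfBlockTop (Fin.last (2 * k), x.2)
  rcases min_choice x.2 x.2.rev with h | h <;> rw [foldedOffset, h]
  · exact reachable_last x
  · exact (reachable_last x).trans hflip

noncomputable def halfBlockComponentEquiv :
    (halfBlockMeander a k).ConnectedComponent ≃ {i : Fin a // i ≤ i.rev} where
  toFun := ConnectedComponent.lift (fun x => ⟨foldedOffset a k x, foldedOffset_le_rev x⟩)
    fun _ _ p _ => Subtype.ext (foldedOffset_eq_of_reachable p.reachable)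
  invFun i := (halfBlockMeander a k).connectedComponentMk (Fin.last _, i)
  left_inv := ConnectedComponent.ind fun x =>
    ConnectedComponent.sound (reachable_last_foldedOffset x).symm
  right_inv i := Subtype.ext (min_eq_left i.2)

lemma halfBlockComponentEquiv_mk (x : Fin (2 * k + 1) × Fin a) :
    (halfBlockComponentEquiv ((halfBlockMeander a k).connectedComponentMk x) : Fin a) =
      foldedOffset a k x :=
  rfl

lemma isCycleComponent_halfBlockMeander_iff (hk : 1 ≤ k)
    (c : (halfBlockMeander a k).ConnectedComponent) :
    (halfBlockMeander a k).IsCycleComponent c ↔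
      (halfBlockComponentEquiv c : Fin a) < (halfBlockComponentEquiv c : Fin a).rev := by
  refine ConnectedComponent.ind (fun x => ?_) c
  have hmk : (halfBlockMeander a k).connectedComponentMk (Fin.last _, foldedOffset a k x) =
      (halfBlockMeander a k).connectedComponentMk x :=
    ConnectedComponent.sound (reachable_last_foldedOffset x).symm
  rw [halfBlockComponentEquiv_mk]
  constructor
  · intro hcyc
    refine (foldedOffset_le_rev x).lt_of_ne fun hfix => ?_
    refine ncard_neighborSet_fromMaps_ne_two (halfBlockTop_involutive a k)
      (halfBlockBottom_involutive a k) ?_ (hcyc _ hmk)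
    rw [halfBlockTop_last, ← hfix]
  · intro hlt y hy
    have hoff : foldedOffset a k y = foldedOffset a k x :=
      foldedOffset_eq_of_reachable (ConnectedComponent.exact hy)
    have hflip : y.2 ≠ y.2.rev := by
      intro h
      have hy' : foldedOffset a k y = y.2 := by rw [foldedOffset, ← h, min_self]
      rw [← hoff, hy', ← h] at hlt
      exact lt_irrefl _ hlt
    refine ncard_neighborSet_fromMaps_eq_two (halfBlockTop_involutive a k)
      (halfBlockBottom_involutive a k) ?_ ?_ ?_
    · exact fun h => hflip (congrArg Prod.snd h).symm
    · exact fun h => hflip (congrArg Prod.snd h).symm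
    · exact fun h => halfBlockPartner_ne_rev hk y.1 (congrArg Prod.fst h)

lemma card_fin_le_rev (a : ℕ) : Nat.card {i : Fin a // i ≤ i.rev} = (a + 1) / 2 := by
  have hle (i : Fin a) : i ≤ i.rev ↔ (i : ℕ) < (a + 1) / 2 := by
    rw [Fin.le_def, Fin.val_rev]
    omega
  rw [Nat.card_congr (Equiv.subtypeEquivRight hle), Nat.card_eq_fintype_card,
    Fintype.card_fin_lt_of_le (by omega)]

lemma card_fin_lt_rev (a : ℕ) : Nat.card {i : Fin a // i < i.rev} = a / 2 := by
  have hlt (i : Fin a) : i < i.rev ↔ (i : ℕ) < a / 2 := by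
    rw [Fin.lt_def, Fin.val_rev]
    omega
  rw [Nat.card_congr (Equiv.subtypeEquivRight hlt), Nat.card_eq_fintype_card,
    Fintype.card_fin_lt_of_le (by omega)]

lemma card_connectedComponent_halfBlockMeander :
    Nat.card (halfBlockMeander a k).ConnectedComponent = (a + 1) / 2 := by
  rw [Nat.card_congr halfBlockComponentEquiv, card_fin_le_rev]

lemma numCycleComponents_halfBlockMeander (hk : 1 ≤ k) :
    numCycleComponents (halfBlockMeander a k) = a / 2 := by
  rw [numCycleComponents, ← card_fin_lt_rev,
    Nat.card_congr (halfBlockComponentEquiv.subtypeEquiv (q := fun i => i.1 < i.1.rev)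
      (isCycleComponent_halfBlockMeander_iff hk)),
    Nat.card_congr (Equiv.subtypeSubtypeEquivSubtype le_of_lt)]

end HalfBlocks

lemma Nat.eq_and_eq_of_add_mul_eq_add_mul {a s t q r : ℕ} (hs : s < a) (ht : t < a)
    (h : s + a * q = t + a * r) : s = t ∧ q = r := by
  have hpos : 0 < a := by omega
  obtain ⟨hq, hs'⟩ := (Nat.div_mod_unique hpos).mpr ⟨h, hs⟩
  obtain ⟨hr, ht'⟩ := (Nat.div_mod_unique hpos (a := t + a * r)).mpr ⟨rfl, ht⟩
  omega

section DoubledBlocks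

variable (a k : ℕ)

abbrev doubledBlocks : List ℕ := List.replicate k (2 * a) ++ [a]

lemma sum_doubledBlocks : (doubledBlocks a k).sum = (2 * k + 1) * a := by
  simp [List.sum_replicate]
  ring

def halfBlockCoords : Fin (2 * k + 1) × Fin a ≃ Fin (doubledBlocks a k).sum :=
  finProdFinEquiv.trans (finCongr (sum_doubledBlocks a k).symm)

variable {a k}

lemma val_halfBlockCoords (x : Fin (2 * k + 1) × Fin a) :
    (halfBlockCoords a k x : ℕ) = x.2 + a * x.1 :=
  rfl

lemma sum_take_doubledBlocks {j : ℕ} (hj : j ≤ k) :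
    ((doubledBlocks a k).take j).sum = a * (2 * j) := by
  rw [List.take_append_of_le_length (by simpa using hj), List.take_replicate, min_eq_left hj,
    List.sum_replicate, smul_eq_mul]
  ring

lemma getElem_doubledBlocks_of_lt {j : ℕ} (hj : j < k) (h : j < (doubledBlocks a k).length) :
    (doubledBlocks a k)[j] = 2 * a := by
  rw [List.getElem_append_left (by simpa using hj), List.getElem_replicate]

lemma getElem_doubledBlocks_self (h : k < (doubledBlocks a k).length) :
    (doubledBlocks a k)[k] = a := by
  simp [List.getElem_append_right]

lemma topArc_doubledBlocks_iff (u v : ℕ) :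
    (∃ j : Fin (doubledBlocks a k).length, ∃ i : ℕ, i < (doubledBlocks a k).get j ∧
      u = ((doubledBlocks a k).take j).sum + i ∧
      v = ((doubledBlocks a k).take j).sum + ((doubledBlocks a k).get j - 1 - i)) ↔
    (∃ j < k, ∃ i < 2 * a, u = a * (2 * j) + i ∧ v = a * (2 * j) + (2 * a - 1 - i)) ∨
      ∃ i < a, u = a * (2 * k) + i ∧ v = a * (2 * k) + (a - 1 - i) := by
  constructor
  · rintro ⟨⟨j, hj⟩, i, hi, hu, hv⟩
    simp only [List.get_eq_getElem] at hi hu hv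
    obtain hjk | rfl : j < k ∨ j = k := by simp at hj; omega
    · rw [getElem_doubledBlocks_of_lt hjk] at hi hv
      rw [sum_take_doubledBlocks hjk.le] at hu hv
      exact .inl ⟨j, hjk, i, hi, hu, hv⟩
    · rw [getElem_doubledBlocks_self] at hi hv
      rw [sum_take_doubledBlocks le_rfl] at hu hv
      exact .inr ⟨i, hi, hu, hv⟩
  · rintro (⟨j, hj, i, hi, hu, hv⟩ | ⟨i, hi, hu, hv⟩)
    · refine ⟨⟨j, by simp; omega⟩, i, ?_⟩
      simp only [List.get_eq_getElem, getElem_doubledBlocks_of_lt hj, sum_take_doubledBlocks hj.le]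
      exact ⟨hi, hu, hv⟩
    · refine ⟨⟨k, by simp⟩, i, ?_⟩
      simp only [List.get_eq_getElem, getElem_doubledBlocks_self, sum_take_doubledBlocks le_rfl]
      exact ⟨hi, hu, hv⟩

lemma topArc_iff_eq_halfBlockPartner (q : Fin (2 * k + 1)) (s : Fin a) (v : ℕ) :
    ((∃ j < k, ∃ i < 2 * a,
        s + a * q = a * (2 * j) + i ∧ v = a * (2 * j) + (2 * a - 1 - i)) ∨
      ∃ i < a, s + a * q = a * (2 * k) + i ∧ v = a * (2 * k) + (a - 1 - i)) ↔
    v = s.rev + a * halfBlockPartner k q := by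
  have hq := q.isLt
  have hs := s.isLt
  simp only [halfBlockPartner, Fin.val_rev]
  constructor
  · rintro (⟨j, hj, i, hi, hu, hv⟩ | ⟨i, hi, hu, hv⟩)
    · have hodd : a * (2 * j + 1) = a * (2 * j) + a := by ring
      by_cases hia : i < a
      · obtain ⟨rfl, hqj⟩ :=
          Nat.eq_and_eq_of_add_mul_eq_add_mul hs hia (hu.trans (add_comm _ _))
        rw [hqj, if_neg (by omega), if_pos (by omega)]
        omega
      · obtain ⟨hsi, hqj⟩ := Nat.eq_and_eq_of_add_mul_eq_add_mul (q := q) (t := i - a)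
          (r := 2 * j + 1) hs (by omega) (by omega)
        rw [hqj, if_neg (by omega), if_neg (by omega), Nat.add_sub_cancel]
        omega
    · obtain ⟨rfl, hqk⟩ := Nat.eq_and_eq_of_add_mul_eq_add_mul hs hi (hu.trans (add_comm _ _))
      rw [hqk, if_pos rfl]
      omega
  · intro hv
    by_cases hqk : (q : ℕ) = 2 * k
    · rw [if_pos hqk] at hv
      rw [hqk] at hv ⊢
      exact .inr ⟨s, hs, by ring, by omega⟩
    · rw [if_neg hqk] at hv
      obtain ⟨j, hj | hj⟩ := Nat.even_or_odd' (q : ℕ)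
      · have hodd : a * (2 * j + 1) = a * (2 * j) + a := by ring
        rw [if_pos (by omega), hj] at hv
        rw [hj]
        exact .inl ⟨j, by omega, s, by omega, by ring, by omega⟩
      · have hodd : a * (2 * j + 1) = a * (2 * j) + a := by ring
        rw [if_neg (by omega), hj, Nat.add_sub_cancel] at hv
        rw [hj]
        exact .inl ⟨j, by omega, s + a, by omega, by omega, by omega⟩

lemma halfBlockCoords_halfBlockBottom (x : Fin (2 * k + 1) × Fin a) :
    halfBlockCoords a k (halfBlockBottom a k x) = (halfBlockCoords a k x).rev := by
  have hq := x.1.isLt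
  have hs := x.2.isLt
  have hsum : a * (2 * k + 1 - (x.1 + 1)) + a * x.1 + a = (2 * k + 1) * a := by
    rw [← Nat.mul_add, show 2 * k + 1 - (x.1 + 1) + x.1 = 2 * k by omega]
    ring
  ext
  simp only [halfBlockBottom, val_halfBlockCoords, Fin.val_rev, sum_doubledBlocks]
  omega

lemma topArc_halfBlockCoords_iff (x y : Fin (2 * k + 1) × Fin a) :
    (∃ j : Fin (doubledBlocks a k).length, ∃ i : ℕ, i < (doubledBlocks a k).get j ∧
      (halfBlockCoords a k x : ℕ) = ((doubledBlocks a k).take j).sum + i ∧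
      (halfBlockCoords a k y : ℕ) =
        ((doubledBlocks a k).take j).sum + ((doubledBlocks a k).get j - 1 - i)) ↔
    y = halfBlockTop a k x := by
  rw [topArc_doubledBlocks_iff, ← (halfBlockCoords a k).apply_eq_iff_eq, Fin.ext_iff]
  exact topArc_iff_eq_halfBlockPartner x.1 x.2 _

lemma bottomArc_halfBlockCoords_iff (x y : Fin (2 * k + 1) × Fin a) :
    (halfBlockCoords a k x : ℕ) + halfBlockCoords a k y = (doubledBlocks a k).sum - 1 ↔
      y = halfBlockBottom a k x := by
  rw [← (halfBlockCoords a k).apply_eq_iff_eq, halfBlockCoords_halfBlockBottom, Fin.ext_iff,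
    Fin.val_rev]
  have := (halfBlockCoords a k x).isLt
  omega

def halfBlockMeanderIso : halfBlockMeander a k ≃g meander (doubledBlocks a k) where
  toEquiv := halfBlockCoords a k
  map_rel_iff' {x y} := by
    simp only [meander, fromRel_adj, topArc_halfBlockCoords_iff,
      bottomArc_halfBlockCoords_iff, (halfBlockCoords a k).injective.ne_iff]
    rfl

end DoubledBlocks

theorem meander_doubled_blocks_components_general (a k : ℕ) (hk : 1 ≤ k) :
    Nat.card (meander (List.replicate k (2 * a) ++ [a])).ConnectedComponent =
      (a + 1) / 2 ∧
    numCycleComponents (meander (List.replicate k (2 * a) ++ [a])) = a / 2 :=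
  ⟨(Nat.card_congr halfBlockMeanderIso.connectedComponentEquiv).symm.trans
      card_connectedComponent_halfBlockMeander,
    halfBlockMeanderIso.numCycleComponents_eq.symm.trans (numCycleComponents_halfBlockMeander hk)⟩

/-- A meander of type `2a|2a|⋯|2a|a` (with `k ≥ 1` blocks of size `2a` followed by one
block of size `a`) has exactly `⌈a/2⌉` connected components, of which exactly `⌊a/2⌋`
are cycle components. -/
theorem meander_doubled_blocks_components (a k : ℕ) (ha : 0 < a) (hk : 1 ≤ k) :
    Nat.card (meander (List.replicate k (2 * a) ++ [a])).ConnectedComponent =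
      (a + 1) / 2 ∧
    numCycleComponents (meander (List.replicate k (2 * a) ++ [a])) = a / 2 :=
  meander_doubled_blocks_components_general a k hk
end
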